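/- arXiv:1208.3518 — 2 statements merged into one kernel-verified Lean document; each statement's English description precedes it below -/
import Mathlib

section
/- For any Hermitian positive definite n×n matrix X and any real q with 0 < q < 1, one has X^q = (sin(qπ)/((1−q)π)) ∫₀^∞ X^{1/2} (λI + X)^{-1} X (λI + X)^{-1} X^{1/2} λ^{q-1} dλ. -/
open scoped Matrix.Norms.L2Operator ComplexOrder
open Matrix MeasureTheory

/-- The real power of a matrix, defined for Hermitian matrices via the spectral
decomposition (and junk value `X` otherwise). -/
noncomputable def mpow {n : Type*} [Fintype n] [DecidableEq n] (X : Matrix n n ℂ) (p : ℝ) :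
    Matrix n n ℂ :=
  if hX : X.IsHermitian then
    (hX.eigenvectorUnitary : Matrix n n ℂ) *
      Matrix.diagonal (fun i => ((hX.eigenvalues i ^ p : ℝ) : ℂ)) *
      (star hX.eigenvectorUnitary : Matrix n n ℂ)
  else X

section Helpers
open Set Real

variable {q : ℝ}
lemma beta_interval {q : ℝ} (hq0 : 0 < q) (hq1 : q < 1) :
    ∫ x in (0:ℝ)..1, x ^ (q-1) * (1-x) ^ (1-q) = (1-q) * (π / Real.sin (π * q)) := by
  have hq1' : (0:ℝ) < 1 - q := by linarith
  have h1 : Complex.Gamma q * Complex.Gamma (2 - q) =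
      Complex.Gamma ((q:ℂ) + (2 - q)) * Complex.betaIntegral q (2 - q) :=
    Complex.Gamma_mul_Gamma_eq_betaIntegral (by simp [hq0]) (by simp [Complex.sub_re]; linarith)
  have h2 : ((q:ℂ) + (2 - q)) = 2 := by ring
  have h3 : Complex.Gamma 2 = 1 := by
    have := Complex.Gamma_nat_eq_factorial 1
    norm_num at this
    simpa using this
  have h4 : Complex.Gamma ((2:ℂ) - q) = (1 - q) * Complex.Gamma (1 - q) := by
    have : ((2:ℂ) - q) = (1 - q) + 1 := by ring
    rw [this, Complex.Gamma_add_one]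
    intro h
    have : (q:ℂ) = 1 := by linear_combination -h
    exact absurd (by exact_mod_cast this) (ne_of_lt hq1)
  -- β(q, 2-q) = (1-q) Γ q Γ (1-q)
  have h5 : Complex.betaIntegral q (2 - q) = (1 - q) * (Complex.Gamma q * Complex.Gamma (1 - q)) := by
    rw [h2, h3, one_mul] at h1
    rw [← h1, h4]; ring
  -- real form of beta integral
  have h6 : Complex.betaIntegral q (2 - q) =
      ((∫ x in (0:ℝ)..1, x ^ (q-1) * (1-x) ^ (1-q) : ℝ) : ℂ) := by
    rw [Complex.betaIntegral, ← intervalIntegral.integral_ofReal]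
    refine intervalIntegral.integral_congr fun x hx => ?_
    rw [uIcc_of_le (by norm_num)] at hx
    obtain ⟨hx0, hx1⟩ := hx
    have e1 : ((q:ℂ) - 1) = ((q - 1 : ℝ) : ℂ) := by push_cast; ring
    have e2 : ((2:ℂ) - (q:ℂ) - 1) = ((1 - q : ℝ) : ℂ) := by push_cast; ring
    have e3 : ((1:ℂ) - (x:ℂ)) = ((1 - x : ℝ) : ℂ) := by push_cast; ring
    rw [e1, e3, e2, Complex.ofReal_mul, Complex.ofReal_cpow hx0, Complex.ofReal_cpow (by linarith : (0:ℝ) ≤ 1 - x)]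
  have h7 : Complex.Gamma (q:ℂ) * Complex.Gamma (1 - (q:ℂ)) = ((π / Real.sin (π * q) : ℝ) : ℂ) := by
    rw [show ((1:ℂ) - q) = ((1 - q : ℝ) : ℂ) by push_cast; ring, Complex.Gamma_ofReal,
      Complex.Gamma_ofReal, ← Complex.ofReal_mul, Real.Gamma_mul_Gamma_one_sub]
  rw [h6, h7] at h5
  have : ((∫ x in (0:ℝ)..1, x ^ (q-1) * (1-x) ^ (1-q) : ℝ) : ℂ)
      = (((1-q) * (π / Real.sin (π * q)) : ℝ) : ℂ) := by
    rw [h5]; push_cast; ring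
  exact_mod_cast this

section Subst
variable {q : ℝ}

lemma subst_facts : (fun x : ℝ => x / (1 - x)) '' Ioo 0 1 = Ioi 0 ∧
    InjOn (fun x : ℝ => x / (1 - x)) (Ioo 0 1) ∧
    (∀ x ∈ Ioo (0:ℝ) 1, HasDerivWithinAt (fun x : ℝ => x / (1 - x)) ((1-x)⁻¹^2) (Ioo 0 1) x) := by
  refine ⟨?_, ?_, ?_⟩
  · ext t
    simp only [mem_image, mem_Ioo, mem_Ioi]
    constructor
    · rintro ⟨x, ⟨hx0, hx1⟩, rfl⟩
      exact div_pos hx0 (by linarith)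
    · intro ht
      refine ⟨t / (1 + t), ⟨div_pos ht (by linarith), ?_⟩, ?_⟩
      · rw [div_lt_one (by linarith)]; linarith
      · field_simp; ring
  · intro a ha b hb hab
    simp only [mem_Ioo] at ha hb
    simp only at hab
    rw [div_eq_div_iff (by linarith) (by linarith)] at hab
    nlinarith [hab]
  · intro x hx
    simp only [mem_Ioo] at hx
    have h1x : (1:ℝ) - x ≠ 0 := by intro h; nlinarith
    have := (hasDerivAt_id x).div ((hasDerivAt_const x (1:ℝ)).sub (hasDerivAt_id x)) h1x
    refine this.hasDerivWithinAt.congr_deriv ?_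
    simp only [Pi.sub_apply, id]
    field_simp
    ring

lemma beta_Ioi (hq0 : 0 < q) (hq1 : q < 1) :
    ∫ t in Ioi (0:ℝ), t ^ (q-1) / (1+t)^2 = (1-q) * (π / Real.sin (π * q)) := by
  obtain ⟨himg, hinj, hderiv⟩ := subst_facts
  have := integral_image_eq_integral_abs_deriv_smul measurableSet_Ioo hderiv hinj
    (fun t : ℝ => t ^ (q-1) / (1+t)^2)
  rw [himg] at this
  rw [this, ← beta_interval hq0 hq1]
  rw [intervalIntegral.integral_of_le zero_le_one, integral_Ioc_eq_integral_Ioo]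
  refine setIntegral_congr_fun measurableSet_Ioo fun x hx => ?_
  simp only [mem_Ioo] at hx
  obtain ⟨hx0, hx1⟩ := hx
  have h1x : (0:ℝ) < 1 - x := by linarith
  have key : (1 : ℝ) + x / (1 - x) = (1-x)⁻¹ := by field_simp; ring
  have e : (1-x) ^ (1-q) = ((1-x) ^ (q-1))⁻¹ := by
    rw [← Real.rpow_neg h1x.le]; ring_nf
  have hne : (1-x) ^ (q-1) ≠ 0 := (Real.rpow_pos_of_pos h1x _).ne'
  rw [smul_eq_mul, key, abs_of_nonneg (by positivity), Real.div_rpow hx0.le h1x.le, e]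
  field_simp

lemma key_scale {μ t : ℝ} (hμ : 0 < μ) (ht : 0 < t) :
    (μ * t) ^ (q-1) * (μ^2/((μ * t)+μ)^2) = μ ^ (q-1) * (t ^ (q-1) / (1+t)^2) := by
  rw [Real.mul_rpow hμ.le ht.le, show ((μ * t) + μ)^2 = μ^2 * (1+t)^2 by ring]
  have h2 : (μ:ℝ)^2 ≠ 0 := by positivity
  field_simp

lemma base_integrable (hq0 : 0 < q) (hq1 : q < 1) :
    IntegrableOn (fun t : ℝ => t ^ (q-1) / (1+t)^2) (Ioi 0) := by
  obtain ⟨himg, hinj, hderiv⟩ := subst_facts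
  rw [← himg, integrableOn_image_iff_integrableOn_abs_deriv_smul measurableSet_Ioo hderiv hinj]
  have hbc : IntervalIntegrable (fun x : ℝ =>
      (x:ℂ) ^ ((q:ℂ) - 1) * (1 - (x:ℂ)) ^ ((2:ℂ) - q - 1)) volume 0 1 :=
    Complex.betaIntegral_convergent (by simp [hq0]) (by simp [Complex.sub_re]; linarith)
  have h2 : IntegrableOn (fun x : ℝ =>
      ‖(x:ℂ) ^ ((q:ℂ) - 1) * (1 - (x:ℂ)) ^ ((2:ℂ) - q - 1)‖) (Ioo 0 1) :=
    MeasureTheory.IntegrableOn.mono_set (hbc.1.norm) Ioo_subset_Ioc_self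
  refine IntegrableOn.congr_fun h2 (fun x hx => ?_) measurableSet_Ioo
  simp only [mem_Ioo] at hx
  obtain ⟨hx0, hx1⟩ := hx
  have h1x : (0:ℝ) < 1 - x := by linarith
  have key : (1 : ℝ) + x / (1 - x) = (1-x)⁻¹ := by field_simp; ring
  rw [norm_mul]
  rw [show ((1:ℂ) - (x:ℂ)) = ((1 - x : ℝ) : ℂ) by push_cast; ring]
  rw [Complex.norm_cpow_eq_rpow_re_of_pos hx0, Complex.norm_cpow_eq_rpow_re_of_pos h1x]
  simp only [Complex.sub_re, Complex.ofReal_re, Complex.one_re, Complex.re_ofNat]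
  have hne : (1-x) ^ (q-1) ≠ 0 := (Real.rpow_pos_of_pos h1x _).ne'
  rw [smul_eq_mul, key, abs_of_nonneg (by positivity), Real.div_rpow hx0.le h1x.le]
  rw [show (2:ℝ) - q - 1 = -(q-1) by ring, Real.rpow_neg h1x.le]
  field_simp

lemma scaled_integral {μ : ℝ} (hμ : 0 < μ) (hq0 : 0 < q) (hq1 : q < 1) :
    (∫ l in Ioi (0:ℝ), l ^ (q-1) * (μ^2/(l+μ)^2)) = μ ^ q * ((1-q) * (π / Real.sin (π * q))) := by
  have h : (∫ t in Ioi (0:ℝ), (μ * t) ^ (q-1) * (μ^2/((μ * t)+μ)^2))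
      = μ⁻¹ • ∫ l in Ioi (0:ℝ), l ^ (q-1) * (μ^2/(l+μ)^2) := by
    simpa using integral_comp_mul_left_Ioi (fun l => l ^ (q-1) * (μ^2/(l+μ)^2)) 0 hμ
  have h2 : (∫ t in Ioi (0:ℝ), (μ * t) ^ (q-1) * (μ^2/((μ * t)+μ)^2))
      = μ ^ (q-1) * ∫ t in Ioi (0:ℝ), t ^ (q-1) / (1+t)^2 := by
    rw [← integral_const_mul]
    exact setIntegral_congr_fun measurableSet_Ioi fun t ht => key_scale hμ ht
  rw [h2, beta_Ioi hq0 hq1] at h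
  have h3 := congrArg (fun z => μ • z) h
  simp only [smul_smul, mul_inv_cancel₀ hμ.ne', one_smul] at h3
  rw [← h3, smul_eq_mul, ← mul_assoc]
  congr 1
  nth_rewrite 1 [← Real.rpow_one μ]
  rw [← Real.rpow_add hμ]
  norm_num

lemma scaled_integrable {μ : ℝ} (hμ : 0 < μ) (hq0 : 0 < q) (hq1 : q < 1) :
    IntegrableOn (fun l : ℝ => l ^ (q-1) * (μ^2/(l+μ)^2)) (Ioi 0) := by
  have h := (integrableOn_Ioi_comp_mul_left_iff (fun l : ℝ => l ^ (q-1) * (μ^2/(l+μ)^2)) 0 hμ).mp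
  rw [mul_zero] at h
  refine h ?_
  have hbase := ((base_integrable hq0 hq1).const_mul (μ ^ (q-1)))
  refine IntegrableOn.congr_fun hbase (fun t ht => ?_) measurableSet_Ioi
  rw [mem_Ioi] at ht
  exact (key_scale hμ ht).symm

end Subst

variable {n : Type*} [Fintype n] [DecidableEq n]
lemma conj_mul_diag (U : Matrix n n ℂ) (hU : star U * U = 1) (a b : n → ℂ) :
    (U * diagonal a * star U) * (U * diagonal b * star U) = U * diagonal (a * b) * star U := by
  rw [Matrix.mul_assoc (U * diagonal a), Matrix.mul_assoc U (diagonal b) (star U),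
    ← Matrix.mul_assoc (star U) U (diagonal b * star U), hU, Matrix.one_mul,
    ← Matrix.mul_assoc (U * diagonal a) (diagonal b) (star U),
    Matrix.mul_assoc U (diagonal a) (diagonal b), diagonal_mul_diagonal]
  rfl

lemma diag_sum (U : Matrix n n ℂ) (v : n → ℂ) :
    U * diagonal v * star U = ∑ i, v i • (U * diagonal (Pi.single i 1) * star U) := by
  have h : diagonal v = ∑ i, v i • diagonal (Pi.single i (1:ℂ)) := by
    ext j k
    rw [Matrix.sum_apply]
    simp only [Matrix.smul_apply, diagonal_apply, Pi.single_apply, smul_eq_mul]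
    by_cases hjk : j = k
    · subst hjk
      simp [Finset.sum_ite_eq]
    · simp [hjk]
  rw [h, Finset.mul_sum, Finset.sum_mul]
  refine Finset.sum_congr rfl fun i _ => ?_
  rw [mul_smul_comm, smul_mul_assoc]

lemma resolvent_diag (U : Matrix n n ℂ) (hU : star U * U = 1) (hU' : U * star U = 1)
    (μ : n → ℝ) (l : ℝ) (hl : ∀ i, (l:ℂ) + μ i ≠ 0) :
    (l • (1 : Matrix n n ℂ) + U * diagonal (fun i => (μ i : ℂ)) * star U)⁻¹ =
      U * diagonal (fun i => ((l:ℂ) + μ i)⁻¹) * star U := by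
  have h1 : l • (1 : Matrix n n ℂ) + U * diagonal (fun i => (μ i : ℂ)) * star U
      = U * diagonal (fun i => (l:ℂ) + μ i) * star U := by
    rw [← diagonal_add, Matrix.mul_add, Matrix.add_mul, ← Matrix.smul_one_eq_diagonal,
      Matrix.mul_smul, Matrix.smul_mul, Matrix.mul_one, hU']
    congr 1
  refine Matrix.inv_eq_right_inv ?_
  rw [h1, conj_mul_diag U hU]
  have : (fun i => (l:ℂ) + μ i) * (fun i => ((l:ℂ) + μ i)⁻¹) = fun _ => 1 := by
    funext i
    exact mul_inv_cancel₀ (hl i)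
  rw [this]
  have : Matrix.diagonal (fun _ : n => (1:ℂ)) = 1 := diagonal_one
  rw [this, Matrix.mul_one, hU']

lemma ofReal_smul_mat (r : ℝ) (M : Matrix n n ℂ) : ((r:ℂ)) • M = r • M := by
  ext i j
  simp [Matrix.smul_apply, Complex.real_smul]

end Helpers

/-- Second integral representation of the fractional power of a positive definite matrix. -/
theorem mpow_integral_repr' {n : Type*} [Fintype n] [DecidableEq n]
    (X : Matrix n n ℂ) (hX : X.PosDef) (q : ℝ) (hq0 : 0 < q) (hq1 : q < 1) :
    mpow X q = (Real.sin (q * Real.pi) / ((1 - q) * Real.pi)) •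
      ∫ l in Set.Ioi (0:ℝ),
        (l ^ (q - 1)) •
          (mpow X (1/2) * (l • (1 : Matrix n n ℂ) + X)⁻¹ * X *
            (l • (1 : Matrix n n ℂ) + X)⁻¹ * mpow X (1/2)) := by
  have h : X.IsHermitian := hX.1
  set U : Matrix n n ℂ := (h.eigenvectorUnitary : Matrix n n ℂ) with hUdef
  have hU : star U * U = 1 := mem_unitaryGroup_iff'.mp h.eigenvectorUnitary.2
  have hU' : U * star U = 1 := mem_unitaryGroup_iff.mp h.eigenvectorUnitary.2
  set μ : n → ℝ := h.eigenvalues with hμdef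
  have hμ : ∀ i, 0 < μ i := fun i => hX.eigenvalues_pos i
  have hXdiag : X = U * Matrix.diagonal (fun i => (μ i : ℂ)) * star U := h.spectral_theorem
  have hmp : ∀ p : ℝ, mpow X p = U * Matrix.diagonal (fun i => ((μ i ^ p : ℝ) : ℂ)) * star U := by
    intro p
    unfold mpow
    rw [dif_pos h]
  set K : ℝ := (1 - q) * (Real.pi / Real.sin (Real.pi * q)) with hKdef
  set c : ℝ := Real.sin (q * Real.pi) / ((1 - q) * Real.pi) with hcdef
  have hsin : 0 < Real.sin (Real.pi * q) :=
    Real.sin_pos_of_pos_of_lt_pi (by positivity) (by nlinarith [Real.pi_pos])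
  have hq1' : (0:ℝ) < 1 - q := by linarith
  have hcK : c * K = 1 := by
    rw [hcdef, hKdef, mul_comm q Real.pi]
    field_simp
  set Cd : n → Matrix n n ℂ := fun i => U * Matrix.diagonal (Pi.single i 1) * star U with hCd
  -- Step 1 : pointwise identification of the integrand
  have step1 : ∀ l ∈ Set.Ioi (0:ℝ),
      (l ^ (q - 1)) •
          (mpow X (1/2) * (l • (1 : Matrix n n ℂ) + X)⁻¹ * X *
            (l • (1 : Matrix n n ℂ) + X)⁻¹ * mpow X (1/2))
        = ∑ i, (l ^ (q-1) * (μ i ^ 2 / (l + μ i)^2)) • Cd i := by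
    intro l hl
    rw [Set.mem_Ioi] at hl
    have hli : ∀ i, (l:ℂ) + μ i ≠ 0 := by
      intro i hc
      have : ((l + μ i : ℝ) : ℂ) = 0 := by push_cast; linear_combination hc
      have h2 : (l + μ i : ℝ) = 0 := by exact_mod_cast this
      nlinarith [hμ i]
    have hres : (l • (1 : Matrix n n ℂ) + X)⁻¹ =
        U * Matrix.diagonal (fun i => ((l:ℂ) + μ i)⁻¹) * star U := by
      rw [hXdiag]
      exact resolvent_diag U hU hU' μ l hli
    rw [hres, hmp (1/2), hXdiag, conj_mul_diag U hU, conj_mul_diag U hU, conj_mul_diag U hU,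
      conj_mul_diag U hU]
    have hw : ((fun i => ((μ i ^ (1/2:ℝ) : ℝ) : ℂ)) * (fun i => ((l:ℂ) + μ i)⁻¹) *
          (fun i => (μ i : ℂ)) * (fun i => ((l:ℂ) + μ i)⁻¹) *
          (fun i => ((μ i ^ (1/2:ℝ) : ℝ) : ℂ)))
        = fun i => ((μ i ^ 2 / (l + μ i)^2 : ℝ) : ℂ) := by
      funext i
      have hs2 : ((μ i ^ (1/2:ℝ) : ℝ) : ℂ) * ((μ i ^ (1/2:ℝ) : ℝ) : ℂ) = (μ i : ℂ) := by
        rw [← Complex.ofReal_mul, ← Real.rpow_add (hμ i)]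
        norm_num
      show ((μ i ^ (1/2:ℝ) : ℝ) : ℂ) * ((l:ℂ) + μ i)⁻¹ * (μ i : ℂ) * ((l:ℂ) + μ i)⁻¹ *
          ((μ i ^ (1/2:ℝ) : ℝ) : ℂ) = _
      push_cast
      have hb : ((l:ℂ) + μ i) ≠ 0 := hli i
      field_simp
      linear_combination (μ i : ℂ) * hs2
    rw [hw, diag_sum U, Finset.smul_sum]
    refine Finset.sum_congr rfl fun i _ => ?_
    rw [ofReal_smul_mat, smul_smul]
  rw [MeasureTheory.setIntegral_congr_fun measurableSet_Ioi step1]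
  -- Step 2 : compute the integral
  have step2 : (∫ l in Set.Ioi (0:ℝ), ∑ i, (l ^ (q-1) * (μ i ^ 2 / (l + μ i)^2)) • Cd i)
      = ∑ i, ((μ i) ^ q * K) • Cd i := by
    rw [MeasureTheory.integral_finset_sum _
      (fun i _ => ((scaled_integrable (hμ i) hq0 hq1).smul_const (Cd i)))]
    refine Finset.sum_congr rfl fun i _ => ?_
    rw [integral_smul_const, scaled_integral (hμ i) hq0 hq1]
  rw [step2, Finset.smul_sum, hmp q, diag_sum U]
  refine Finset.sum_congr rfl fun i _ => ?_
  rw [ofReal_smul_mat, smul_smul]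
  congr 1
  rw [show c * (μ i ^ q * K) = μ i ^ q * (c * K) by ring, hcK, mul_one]
end

section
/- Let A₁,…,A_m be n×n complex matrices, Q positive definite, and p₁,…,p_m ∈ (0,1]. The equation X − Σᵢ Aᵢ* X^{pᵢ} Aᵢ = Q has a positive definite solution X if and only if there exist a nonsingular matrix W and matrices Y₁,…,Y_m with Aᵢ = (W*W)^{−pᵢ/2} Yᵢ (W*W)^{1/2} for each i, such that with Z = Q^{1/2}(W*W)^{−1/2}, the block column matrix with blocks Z, Y₁, …, Y_m is column orthonormal, i.e., Z*Z + Σᵢ Yᵢ*Yᵢ = I. In that case X = W*W is a solution. -/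
open scoped Matrix.Norms.L2Operator ComplexOrder
open Matrix MeasureTheory

section aux
variable {n : Type*} [Fintype n] [DecidableEq n] {X : Matrix n n ℂ}

lemma mpow_eq (hX : X.IsHermitian) (p : ℝ) :
    mpow X p = (hX.eigenvectorUnitary : Matrix n n ℂ) *
      Matrix.diagonal (fun i => ((hX.eigenvalues i ^ p : ℝ) : ℂ)) *
      (star hX.eigenvectorUnitary : Matrix n n ℂ) := dif_pos hX

lemma mpow_isHermitian (hX : X.IsHermitian) (p : ℝ) : (mpow X p).IsHermitian := by
  rw [mpow_eq hX]
  have hd : (Matrix.diagonal (fun i => ((hX.eigenvalues i ^ p : ℝ) : ℂ))).IsHermitian :=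
    Matrix.isHermitian_diagonal_of_self_adjoint _ (by
      funext i
      simp [Pi.star_def, Complex.conj_ofReal])
  have := Matrix.isHermitian_mul_mul_conjTranspose
    (hX.eigenvectorUnitary : Matrix n n ℂ) hd
  simpa [Matrix.star_eq_conjTranspose] using this

lemma mpow_mul_mpow (hX : X.PosDef) (p q : ℝ) :
    mpow X p * mpow X q = mpow X (p + q) := by
  rw [mpow_eq hX.1 p, mpow_eq hX.1 q, mpow_eq hX.1 (p+q)]
  set U : Matrix n n ℂ := (hX.1.eigenvectorUnitary : Matrix n n ℂ) with hU
  have h1 : star U * U = 1 := Matrix.UnitaryGroup.star_mul_self _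
  have hd : Matrix.diagonal (fun i => ((hX.1.eigenvalues i ^ p : ℝ) : ℂ)) *
      Matrix.diagonal (fun i => ((hX.1.eigenvalues i ^ q : ℝ) : ℂ)) =
      Matrix.diagonal (fun i => ((hX.1.eigenvalues i ^ (p+q) : ℝ) : ℂ)) := by
    rw [diagonal_mul_diagonal]
    exact congrArg Matrix.diagonal (funext fun i => by
      rw [← Complex.ofReal_mul, ← Real.rpow_add (hX.eigenvalues_pos i)])
  calc U * Matrix.diagonal (fun i => ((hX.1.eigenvalues i ^ p : ℝ) : ℂ)) * star U *
        (U * Matrix.diagonal (fun i => ((hX.1.eigenvalues i ^ q : ℝ) : ℂ)) * star U)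
      = U * (Matrix.diagonal (fun i => ((hX.1.eigenvalues i ^ p : ℝ) : ℂ)) * ((star U * U) *
        (Matrix.diagonal (fun i => ((hX.1.eigenvalues i ^ q : ℝ) : ℂ)) * star U))) := by
        simp only [Matrix.mul_assoc]
    _ = U * (Matrix.diagonal (fun i => ((hX.1.eigenvalues i ^ p : ℝ) : ℂ)) *
        Matrix.diagonal (fun i => ((hX.1.eigenvalues i ^ q : ℝ) : ℂ))) * star U := by
        rw [h1, Matrix.one_mul]; simp only [Matrix.mul_assoc]
    _ = U * Matrix.diagonal (fun i => ((hX.1.eigenvalues i ^ (p+q) : ℝ) : ℂ)) * star U := by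
        rw [hd]

lemma mpow_zero (hX : X.IsHermitian) : mpow X 0 = 1 := by
  rw [mpow_eq hX]
  simp only [Real.rpow_zero, Complex.ofReal_one, diagonal_one, Matrix.mul_one]
  exact (Matrix.mem_unitaryGroup_iff).mp hX.eigenvectorUnitary.2

lemma mpow_one (hX : X.IsHermitian) : mpow X 1 = X := by
  rw [mpow_eq hX]
  simp only [Real.rpow_one]
  exact (hX.spectral_theorem).symm

lemma mpow_mul_mpow_mul (hX : X.PosDef) (r s : ℝ) (M : Matrix n n ℂ) :
    mpow X r * (mpow X s * M) = mpow X (r + s) * M := by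
  rw [← Matrix.mul_assoc, mpow_mul_mpow hX]

lemma posDef_conjTranspose_mul_self {W : Matrix n n ℂ} (hW : IsUnit W) :
    (Wᴴ * W).PosDef := by
  refine PosDef.of_dotProduct_mulVec_pos (isHermitian_conjTranspose_mul_self _) fun x hx => ?_
  have hWx : W *ᵥ x ≠ 0 := fun h => hx (by
    have := Matrix.mulVec_injective_iff_isUnit.2 hW
    exact this (by simpa using h))
  have : star x ⬝ᵥ (Wᴴ * W) *ᵥ x = star (W *ᵥ x) ⬝ᵥ (W *ᵥ x) := by
    rw [← mulVec_mulVec, dotProduct_mulVec, vecMul_conjTranspose, star_star]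
  rw [this]
  exact Matrix.dotProduct_star_self_pos_iff.2 hWx

lemma mpow_posDef (hX : X.PosDef) (p : ℝ) : (mpow X p).PosDef := by
  have hu : IsUnit (mpow X (p/2)) := by
    have h : mpow X (p/2) * mpow X (-(p/2)) = 1 := by
      rw [mpow_mul_mpow hX]; simpa using mpow_zero hX.1
    have hd := congrArg Matrix.det h
    rw [Matrix.det_mul, Matrix.det_one] at hd
    exact (Matrix.isUnit_iff_isUnit_det _).2 (IsUnit.of_mul_eq_one _ hd)
  have := posDef_conjTranspose_mul_self hu
  rwa [(mpow_isHermitian hX.1 (p/2)).eq, mpow_mul_mpow hX, show p/2 + p/2 = p by ring] at this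

end aux

section aux2
variable {n : Type*} [Fintype n] [DecidableEq n] {X Q : Matrix n n ℂ}

lemma matIsUnit_of_mul_eq_one {A B : Matrix n n ℂ} (h : A * B = 1) : IsUnit A := by
  have hd := congrArg Matrix.det h
  rw [Matrix.det_mul, Matrix.det_one] at hd
  exact (Matrix.isUnit_iff_isUnit_det _).2 (IsUnit.of_mul_eq_one _ hd)

lemma Zherm (hX : X.PosDef) (hQ : Q.PosDef) :
    (mpow Q (1/2) * mpow X (-(1/2)))ᴴ * (mpow Q (1/2) * mpow X (-(1/2)))
      = mpow X (-(1/2)) * (Q * mpow X (-(1/2))) := by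
  simp only [conjTranspose_mul, (mpow_isHermitian hX.1 (-(1/2))).eq,
    (mpow_isHermitian hQ.1 (1/2)).eq, Matrix.mul_assoc]
  rw [mpow_mul_mpow_mul hQ (1/2) (1/2)]
  norm_num [mpow_one hQ.1]

lemma Nmul (hX : X.PosDef) : mpow X (-(1/2)) * (X * mpow X (-(1/2))) = 1 := by
  nth_rewrite 2 [← mpow_one hX.1]
  rw [mpow_mul_mpow_mul hX (-(1/2)) 1, mpow_mul_mpow hX]
  norm_num [mpow_zero hX.1]

end aux2

/-- Existence of a positive definite solution of `X - ∑ Aᵢ* X^(pᵢ) Aᵢ = Q` is equivalent to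
a factorization of the coefficient matrices; in that case `X = W*W` is a solution. -/
theorem exists_posDef_solution_iff_factorization {n : Type*} [Fintype n] [DecidableEq n]
    (m : ℕ) (A : Fin m → Matrix n n ℂ) (Q : Matrix n n ℂ) (hQ : Q.PosDef)
    (p : Fin m → ℝ) (hp : ∀ i, 0 < p i ∧ p i ≤ 1) :
    ((∃ X : Matrix n n ℂ, X.PosDef ∧
        X - ∑ i, (A i)ᴴ * mpow X (p i) * A i = Q) ↔
      (∃ (W : Matrix n n ℂ) (Y : Fin m → Matrix n n ℂ), IsUnit W ∧
        (∀ i, A i = mpow (Wᴴ * W) (-(p i) / 2) * Y i * mpow (Wᴴ * W) (1/2)) ∧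
        (mpow Q (1/2) * mpow (Wᴴ * W) (-(1/2)))ᴴ * (mpow Q (1/2) * mpow (Wᴴ * W) (-(1/2))) +
          ∑ i, (Y i)ᴴ * Y i = 1)) ∧
    (∀ (W : Matrix n n ℂ) (Y : Fin m → Matrix n n ℂ), IsUnit W →
      (∀ i, A i = mpow (Wᴴ * W) (-(p i) / 2) * Y i * mpow (Wᴴ * W) (1/2)) →
      (mpow Q (1/2) * mpow (Wᴴ * W) (-(1/2)))ᴴ * (mpow Q (1/2) * mpow (Wᴴ * W) (-(1/2))) +
        ∑ i, (Y i)ᴴ * Y i = 1 →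
      (Wᴴ * W).PosDef ∧ Wᴴ * W - ∑ i, (A i)ᴴ * mpow (Wᴴ * W) (p i) * A i = Q) := by
  have part2 : ∀ (W : Matrix n n ℂ) (Y : Fin m → Matrix n n ℂ), IsUnit W →
      (∀ i, A i = mpow (Wᴴ * W) (-(p i) / 2) * Y i * mpow (Wᴴ * W) (1/2)) →
      (mpow Q (1/2) * mpow (Wᴴ * W) (-(1/2)))ᴴ * (mpow Q (1/2) * mpow (Wᴴ * W) (-(1/2))) +
        ∑ i, (Y i)ᴴ * Y i = 1 →
      (Wᴴ * W).PosDef ∧ Wᴴ * W - ∑ i, (A i)ᴴ * mpow (Wᴴ * W) (p i) * A i = Q := by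
    intro W Y hW hA hOrth
    have hX : (Wᴴ * W).PosDef := posDef_conjTranspose_mul_self hW
    refine ⟨hX, ?_⟩
    set X := Wᴴ * W with hXdef
    rw [Zherm hX hQ] at hOrth
    have hsum : ∑ i, (Y i)ᴴ * Y i
        = 1 - mpow X (-(1/2)) * (Q * mpow X (-(1/2))) := eq_sub_of_add_eq' hOrth
    have hterm : ∀ i, (A i)ᴴ * mpow X (p i) * A i
        = mpow X (1/2) * ((Y i)ᴴ * Y i * mpow X (1/2)) := by
      intro i
      rw [hA i]
      simp only [conjTranspose_mul, (mpow_isHermitian hX.1 (-(p i) / 2)).eq,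
        (mpow_isHermitian hX.1 (1/2)).eq, Matrix.mul_assoc]
      rw [mpow_mul_mpow_mul hX (-(p i)/2) (p i), mpow_mul_mpow_mul hX _ (-(p i)/2),
        show -(p i) / 2 + p i + (-(p i) / 2) = 0 by ring, mpow_zero hX.1, Matrix.one_mul]
    have hS : ∑ i, (A i)ᴴ * mpow X (p i) * A i = X - Q := by
      simp only [hterm]
      rw [← Finset.mul_sum, ← Finset.sum_mul, hsum, sub_mul, one_mul, mul_sub,
        mpow_mul_mpow hX]
      simp only [Matrix.mul_assoc]
      rw [mpow_mul_mpow_mul hX (1/2) (-(1/2)), mpow_mul_mpow hX (-(1/2)) (1/2)]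
      norm_num [mpow_zero hX.1, mpow_one hX.1]
    rw [hS, sub_sub_cancel]
  refine ⟨⟨?_, ?_⟩, part2⟩
  · rintro ⟨X, hX, hEq⟩
    have hWW : (mpow X (1/2))ᴴ * mpow X (1/2) = X := by
      rw [(mpow_isHermitian hX.1 (1/2)).eq, mpow_mul_mpow hX]
      norm_num [mpow_one hX.1]
    have hQS : Q + ∑ i, (A i)ᴴ * mpow X (p i) * A i = X := by
      rw [← hEq]; abel
    refine ⟨mpow X (1/2), fun i => mpow X (p i / 2) * (A i * mpow X (-(1/2))), ?_, ?_, ?_⟩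
    · refine matIsUnit_of_mul_eq_one (B := mpow X (-(1/2))) ?_
      rw [mpow_mul_mpow hX]
      norm_num [mpow_zero hX.1]
    · intro i
      rw [hWW]
      simp only [Matrix.mul_assoc]
      rw [mpow_mul_mpow_mul hX (-(p i) / 2) (p i / 2),
        show -(p i) / 2 + p i / 2 = 0 by ring, mpow_zero hX.1, Matrix.one_mul,
        mpow_mul_mpow hX (-(1/2)) (1/2)]
      norm_num [mpow_zero hX.1]
    · rw [hWW, Zherm hX hQ]
      have hterm : ∀ i, (mpow X (p i / 2) * (A i * mpow X (-(1/2))))ᴴ *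
            (mpow X (p i / 2) * (A i * mpow X (-(1/2))))
          = mpow X (-(1/2)) * (((A i)ᴴ * mpow X (p i) * A i) * mpow X (-(1/2))) := by
        intro i
        simp only [conjTranspose_mul, (mpow_isHermitian hX.1 (p i / 2)).eq,
          (mpow_isHermitian hX.1 (-(1/2))).eq, Matrix.mul_assoc]
        rw [mpow_mul_mpow_mul hX (p i / 2) (p i / 2), show p i / 2 + p i / 2 = p i by ring]
      simp only [hterm]
      rw [← Finset.mul_sum, ← Finset.sum_mul, ← mul_add, ← add_mul, hQS, Nmul hX]
  · rintro ⟨W, Y, hW, hA, hOrth⟩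
    obtain ⟨hpos, heq⟩ := part2 W Y hW hA hOrth
    exact ⟨Wᴴ * W, hpos, heq⟩
end
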